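/- arXiv:2305.12154 — 2 statements merged into one kernel-verified Lean document; each statement's English description precedes it below -/
import Mathlib

section
/- Let X be a vector space over 𝕂 (where 𝕂 = ℝ or ℂ) that is not finite-dimensional. Then there exist two norms f and g on X that are not equivalent, i.e. there do not exist reals λ, μ > 0 with λ·f(x) ≤ g(x) ≤ μ·f(x) for all x ∈ X. -/
/-- A norm on a vector space `X` over `𝕂` (`𝕂 = ℝ` or `ℂ`). -/
def IsNorm (𝕂 : Type*) [RCLike 𝕂] {X : Type*} [AddCommGroup X] [Module 𝕂 X]
    (f : X → ℝ) : Prop :=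
  (∀ x, 0 ≤ f x) ∧ (∀ x, f x = 0 ↔ x = 0) ∧ (∀ x y, f (x + y) ≤ f x + f y) ∧
    (∀ (c : 𝕂) (x : X), f (c • x) = ‖c‖ * f x)

/-- Weighted ℓ¹ norm with respect to a basis. -/
noncomputable def wnorm {𝕂 X : Type*} [RCLike 𝕂] [AddCommGroup X] [Module 𝕂 X]
    {ι : Type*} (b : Module.Basis ι 𝕂 X) (w : ι → ℝ) (x : X) : ℝ :=
  ∑ i ∈ (b.repr x).support, w i * ‖b.repr x i‖

lemma wnorm_eq_sum {𝕂 X : Type*} [RCLike 𝕂] [AddCommGroup X] [Module 𝕂 X]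
    {ι : Type*} (b : Module.Basis ι 𝕂 X) (w : ι → ℝ) (x : X) (s : Finset ι)
    (hs : (b.repr x).support ⊆ s) :
    wnorm b w x = ∑ i ∈ s, w i * ‖b.repr x i‖ := by
  refine Finset.sum_subset hs ?_
  intro i _ hi
  simp [Finsupp.notMem_support_iff.mp hi]

lemma isNorm_wnorm {𝕂 X : Type*} [RCLike 𝕂] [AddCommGroup X] [Module 𝕂 X]
    {ι : Type*} (b : Module.Basis ι 𝕂 X) (w : ι → ℝ) (hw : ∀ i, 1 ≤ w i) :
    IsNorm 𝕂 (wnorm b w) := by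
  classical
  have hw0 : ∀ i, 0 ≤ w i := fun i => le_trans zero_le_one (hw i)
  refine ⟨?_, ?_, ?_, ?_⟩
  · intro x
    exact Finset.sum_nonneg fun i _ => mul_nonneg (hw0 i) (norm_nonneg _)
  · intro x
    constructor
    · intro hx
      rw [wnorm, Finset.sum_eq_zero_iff_of_nonneg
        (fun i _ => mul_nonneg (hw0 i) (norm_nonneg _))] at hx
      by_contra hxne
      have : (b.repr x) ≠ 0 := fun hh => hxne (by
        have := congrArg b.repr.symm hh
        simpa using this)
      obtain ⟨i, hi⟩ := Finsupp.ne_iff.mp this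
      have hi' : i ∈ (b.repr x).support := by simpa [Finsupp.mem_support_iff] using hi
      have := hx i hi'
      have hpos : 0 < w i * ‖b.repr x i‖ := by
        apply mul_pos (lt_of_lt_of_le zero_lt_one (hw i))
        simpa [norm_pos_iff] using hi
      linarith
    · intro hx
      subst hx
      simp [wnorm]
  · intro x y
    have hsub : (b.repr (x + y)).support ⊆ (b.repr x).support ∪ (b.repr y).support := by
      rw [map_add]; exact Finsupp.support_add
    rw [wnorm_eq_sum b w (x + y) _ hsub,
      wnorm_eq_sum b w x ((b.repr x).support ∪ (b.repr y).support) Finset.subset_union_left,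
      wnorm_eq_sum b w y ((b.repr x).support ∪ (b.repr y).support) Finset.subset_union_right,
      ← Finset.sum_add_distrib]
    refine Finset.sum_le_sum fun i _ => ?_
    rw [← mul_add]
    refine mul_le_mul_of_nonneg_left ?_ (hw0 i)
    rw [map_add]
    exact norm_add_le _ _
  · intro c x
    have hsub : (b.repr (c • x)).support ⊆ (b.repr x).support := by
      rw [map_smul]
      exact Finsupp.support_smul
    rw [wnorm_eq_sum b w (c • x) _ hsub, wnorm, Finset.mul_sum]
    refine Finset.sum_congr rfl fun i _ => ?_
    rw [map_smul]
    simp [Finsupp.smul_apply, norm_mul]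
    ring

/-- On an infinite-dimensional vector space `X` over `𝕂` there exist two non-equivalent
norms. -/
theorem stmt_11 {𝕂 X : Type*} [RCLike 𝕂] [AddCommGroup X] [Module 𝕂 X]
    (h : ¬ FiniteDimensional 𝕂 X) :
    ∃ f g : X → ℝ, IsNorm 𝕂 f ∧ IsNorm 𝕂 g ∧
      ¬∃ lam mu : ℝ, 0 < lam ∧ 0 < mu ∧
        ∀ x : X, lam * f x ≤ g x ∧ g x ≤ mu * f x := by
  classical
  set ι := Module.Basis.ofVectorSpaceIndex 𝕂 X
  set b : Module.Basis ι 𝕂 X := Module.Basis.ofVectorSpace 𝕂 X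
  have hinf : Infinite ι := by
    by_contra hfin
    rw [not_infinite_iff_finite] at hfin
    exact h (Module.Finite.of_basis b)
  let e : ℕ ↪ ι := Infinite.natEmbedding ι
  let w : ι → ℝ := fun i => if hh : ∃ n, e n = i then (hh.choose : ℝ) + 1 else 1
  have hw : ∀ i, 1 ≤ w i := by
    intro i
    by_cases hh : ∃ n, e n = i
    · simp only [w, dif_pos hh]
      have : (0:ℝ) ≤ (hh.choose : ℝ) := Nat.cast_nonneg _
      linarith
    · simp [w, dif_neg hh]
  have hwe : ∀ n, w (e n) = (n : ℝ) + 1 := by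
    intro n
    have hex : ∃ m, e m = e n := ⟨n, rfl⟩
    have : hex.choose = n := e.injective hex.choose_spec
    simp only [w, dif_pos hex, this]
  refine ⟨wnorm b (fun _ => 1), wnorm b w, isNorm_wnorm b _ (fun _ => le_refl 1),
    isNorm_wnorm b w hw, ?_⟩
  rintro ⟨lam, mu, _, hmu, hle⟩
  obtain ⟨n, hn⟩ := exists_nat_gt mu
  have hbn : ∀ v : ι → ℝ, wnorm b v (b (e n)) = v (e n) := by
    intro v
    rw [wnorm_eq_sum b v _ {e n} (by rw [b.repr_self]; exact Finsupp.support_single_subset)]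
    simp [b.repr_self]
  have := (hle (b (e n))).2
  rw [hbn, hbn, hwe] at this
  simp only [mul_one] at this
  have : (n : ℝ) < mu := by linarith
  linarith
end

section
/- Let X be a vector space over 𝕂 (where 𝕂 = ℝ or ℂ) that is not finite-dimensional. Then there exists a family (f_p)_{p ∈ [1,∞)} of norms on X, indexed by the real interval [1, ∞), such that for all p ≠ q in [1, ∞) the norms f_p and f_q are not equivalent; in particular X admits uncountably many pairwise non-equivalent norms. -/
private lemma aux_unbounded (s c : ℝ) (hs : 0 < s) : ∃ n : ℕ, c < ((n : ℝ) + 1) ^ s := by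
  obtain ⟨n, hn⟩ := exists_nat_gt (max c 0 ^ (1/s))
  refine ⟨n, ?_⟩
  have h0 : (0:ℝ) ≤ max c 0 := le_max_right _ _
  have : (max c 0 ^ (1/s)) ^ s < ((n:ℝ)+1) ^ s := by
    apply Real.rpow_lt_rpow (Real.rpow_nonneg h0 _) (hn.trans (by linarith)) hs
  rw [← Real.rpow_mul h0, one_div, inv_mul_cancel₀ hs.ne', Real.rpow_one] at this
  exact (le_max_left c 0).trans_lt this

/-- On an infinite-dimensional vector space `X` over `𝕂` there is a family of norms
indexed by the real interval `[1, ∞)` that are pairwise non-equivalent; in particular,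
`X` admits uncountably many pairwise non-equivalent norms. -/
theorem stmt_13 {𝕂 X : Type*} [RCLike 𝕂] [AddCommGroup X] [Module 𝕂 X]
    (h : ¬ FiniteDimensional 𝕂 X) :
    ∃ f : Set.Ici (1 : ℝ) → X → ℝ,
      (∀ p, IsNorm 𝕂 (f p)) ∧
      ∀ p q, p ≠ q →
        ¬∃ lam mu : ℝ, 0 < lam ∧ 0 < mu ∧
          ∀ x : X, lam * f p x ≤ f q x ∧ f q x ≤ mu * f p x := by
  classical
  set ι := Module.Basis.ofVectorSpaceIndex 𝕂 X with hι
  set b : Module.Basis ι 𝕂 X := Module.Basis.ofVectorSpace 𝕂 X with hb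
  haveI : Infinite ι := by
    by_contra hfin
    rw [not_infinite_iff_finite] at hfin
    haveI := Fintype.ofFinite ι
    exact h (Module.Finite.of_basis b)
  set e : ℕ ↪ ι := Infinite.natEmbedding ι with he
  set w : Set.Ici (1:ℝ) → ι → ℝ := fun p i =>
    if hx : ∃ n, e n = i then ((hx.choose : ℝ) + 1) ^ (p : ℝ) else 1 with hw
  have hw1 : ∀ p i, 1 ≤ w p i := by
    intro p i
    rw [hw]
    dsimp only
    split
    · next hx =>
        apply Real.one_le_rpow (le_add_of_nonneg_left (Nat.cast_nonneg _))
        exact le_trans zero_le_one p.2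
    · exact le_refl 1
  have hwe : ∀ p n, w p (e n) = ((n : ℝ) + 1) ^ (p : ℝ) := by
    intro p n
    have hx : ∃ m, e m = e n := ⟨n, rfl⟩
    have : hx.choose = n := e.injective hx.choose_spec
    rw [hw]
    simp only [dif_pos hx, this]
  refine ⟨fun p x => (b.repr x).sum fun i c => w p i * ‖c‖, ?_, ?_⟩
  · intro p
    refine ⟨?_, ?_, ?_, ?_⟩
    · intro x
      exact Finset.sum_nonneg fun i _ => mul_nonneg (by linarith [hw1 p i]) (norm_nonneg _)
    · intro x
      constructor
      · intro hx
        have h0 : ∀ i ∈ (b.repr x).support, w p i * ‖b.repr x i‖ = 0 :=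
          (Finset.sum_eq_zero_iff_of_nonneg (fun i _ => mul_nonneg (by linarith [hw1 p i]) (norm_nonneg _))).mp hx
        have : b.repr x = 0 := by
          ext i
          by_contra hc
          have hi : i ∈ (b.repr x).support := Finsupp.mem_support_iff.mpr hc
          have := h0 i hi
          have hwp : w p i ≠ 0 := by linarith [hw1 p i]
          have : ‖b.repr x i‖ = 0 := by
            rcases mul_eq_zero.mp this with h' | h'
            · exact absurd h' hwp
            · exact h'
          exact hc (norm_eq_zero.mp this)
        simpa using congrArg b.repr.symm this
      · intro hx; subst hx; simp
    · intro x y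
      dsimp only
      have hsub : (b.repr (x + y)).support ⊆ (b.repr x).support ∪ (b.repr y).support := by
        rw [map_add]; exact Finsupp.support_add
      set s := (b.repr x).support ∪ (b.repr y).support with hs
      rw [Finsupp.sum_of_support_subset _ hsub _ (fun i _ => by simp),
        Finsupp.sum_of_support_subset _ (Finset.subset_union_left) _ (fun i _ => by simp),
        Finsupp.sum_of_support_subset _ (Finset.subset_union_right) _ (fun i _ => by simp),
        ← Finset.sum_add_distrib]
      apply Finset.sum_le_sum
      intro i _
      rw [map_add, Finsupp.add_apply, ← mul_add]
      have := norm_add_le (b.repr x i) (b.repr y i)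
      have h0 : (0:ℝ) ≤ w p i := by linarith [hw1 p i]
      nlinarith
    · intro c x
      dsimp only
      have hsub : (b.repr (c • x)).support ⊆ (b.repr x).support := by
        rw [map_smul]; exact Finsupp.support_smul
      rw [Finsupp.sum_of_support_subset _ hsub _ (fun i _ => by simp), Finsupp.sum,
        Finset.mul_sum]
      apply Finset.sum_congr rfl
      intro i _
      rw [map_smul, Finsupp.smul_apply, smul_eq_mul, norm_mul]
      ring
  · rintro p q hpq ⟨lam, mu, hlam, hmu, hcmp⟩
    have hval : ∀ (r : Set.Ici (1:ℝ)) (n : ℕ),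
        ((b.repr (b (e n))).sum fun i c => w r i * ‖c‖) = ((n : ℝ) + 1) ^ (r : ℝ) := by
      intro r n
      rw [Module.Basis.repr_self, Finsupp.sum_single_index (by simp), hwe, norm_one, mul_one]
    rcases lt_or_gt_of_ne (fun hh : (p:ℝ) = (q:ℝ) => hpq (Subtype.ext hh)) with hlt | hlt
    · -- p < q : use mu : (n+1)^q ≤ mu (n+1)^p
      obtain ⟨n, hn⟩ := aux_unbounded ((q:ℝ) - p) mu (by linarith)
      have h1 := (hcmp (b (e n))).2
      simp only [hval] at h1
      have hbase : (1:ℝ) ≤ (n:ℝ) + 1 := le_add_of_nonneg_left (Nat.cast_nonneg _)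
      have hsplit : ((n:ℝ)+1) ^ (q:ℝ) = ((n:ℝ)+1) ^ ((q:ℝ) - p) * ((n:ℝ)+1) ^ (p:ℝ) := by
        rw [← Real.rpow_add (by linarith)]; ring_nf
      rw [hsplit] at h1
      have hp0 : (0:ℝ) < ((n:ℝ)+1) ^ (p:ℝ) := Real.rpow_pos_of_pos (by linarith) _
      have := (mul_le_mul_iff_of_pos_right hp0).mp h1
      linarith
    · -- q < p : use lam : lam (n+1)^p ≤ (n+1)^q
      obtain ⟨n, hn⟩ := aux_unbounded ((p:ℝ) - q) lam⁻¹ (by linarith)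
      have h1 := (hcmp (b (e n))).1
      simp only [hval] at h1
      have hsplit : ((n:ℝ)+1) ^ (p:ℝ) = ((n:ℝ)+1) ^ ((p:ℝ) - q) * ((n:ℝ)+1) ^ (q:ℝ) := by
        rw [← Real.rpow_add (by positivity)]; ring_nf
      rw [hsplit] at h1
      have hq0 : (0:ℝ) < ((n:ℝ)+1) ^ (q:ℝ) := Real.rpow_pos_of_pos (by positivity) _
      have h2 : lam * (((n:ℝ)+1) ^ ((p:ℝ) - q)) ≤ 1 := by
        rw [← mul_assoc] at h1
        exact (mul_le_mul_iff_of_pos_right hq0).mp (h1.trans_eq (one_mul _).symm)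
      have h3 := mul_lt_mul_of_pos_left hn hlam
      rw [mul_inv_cancel₀ hlam.ne'] at h3
      linarith
end
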